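/- Let E be a W*-algebra and H a selfdual Hilbert right E-module. If K is a Hilbert right E-submodule of H of the form K = p(H) for some projection p ∈ Pr L_E(H), then K is closed in H equipped with the weak topology σ(H, Ḣ) of pointwise convergence on the predual Ḣ of H. -/

import Mathlib

open scoped Topology

/-- The data of a Hilbert right `E`-module structure on a Banach space `H`,
where `E` is a C*-algebra over `𝕜 = ℝ` or `ℂ`: a right module action `smul : H → E → H`
and an `E`-valued inner product `inner : H → H → E`, `E`-linear in the first variable. -/
structure HilbertModuleData (𝕜 E H : Type*) [RCLike 𝕜]
    [NormedRing E] [StarRing E] [CStarRing E] [NormedAlgebra 𝕜 E] [StarModule 𝕜 E]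
    [CompleteSpace E] [PartialOrder E] [StarOrderedRing E]
    [NormedAddCommGroup H] [NormedSpace 𝕜 H] [CompleteSpace H] : Type _ where
  smul : H → E → H
  inner : H → H → E
  add_smul' : ∀ ξ η x, smul (ξ + η) x = smul ξ x + smul η x
  smul_add' : ∀ ξ x y, smul ξ (x + y) = smul ξ x + smul ξ y
  smul_mul' : ∀ ξ x y, smul ξ (x * y) = smul (smul ξ x) y
  smul_one' : ∀ ξ, smul ξ 1 = ξ
  smul_scalar' : ∀ (c : 𝕜) ξ x, smul (c • ξ) x = c • smul ξ x
  inner_add_left' : ∀ ξ η ζ, inner (ξ + η) ζ = inner ξ ζ + inner η ζ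
  inner_smul_left' : ∀ (c : 𝕜) ξ η, inner (c • ξ) η = c • inner ξ η
  inner_smul_module' : ∀ ξ x η, inner (smul ξ x) η = inner ξ η * x
  star_inner' : ∀ ξ η, star (inner ξ η) = inner η ξ
  inner_self_nonneg' : ∀ ξ, 0 ≤ inner ξ ξ
  norm_eq' : ∀ ξ, ‖ξ‖ ^ 2 = ‖inner ξ ξ‖
  inner_continuous' : ∀ η, Continuous fun ξ => inner ξ η

namespace HilbertModuleData

variable {𝕜 E H : Type*} [RCLike 𝕜]
    [NormedRing E] [StarRing E] [CStarRing E] [NormedAlgebra 𝕜 E] [StarModule 𝕜 E]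
    [CompleteSpace E] [PartialOrder E] [StarOrderedRing E]
    [NormedAddCommGroup H] [NormedSpace 𝕜 H] [CompleteSpace H]
    (M : HilbertModuleData 𝕜 E H)

lemma inner_add_right (ξ η ζ : H) :
    M.inner ξ (η + ζ) = M.inner ξ η + M.inner ξ ζ := by
  have h := congrArg star (M.inner_add_left' η ζ ξ)
  simpa [M.star_inner', star_add] using h

lemma inner_smul_right (c : 𝕜) (ξ η : H) :
    M.inner ξ (c • η) = star c • M.inner ξ η := by
  have h := congrArg star (M.inner_smul_left' c η ξ)
  simpa [M.star_inner', star_smul] using h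

/-- A bounded `E`-linear map (module morphism) from `H` to `E`. -/
def IsModuleMap (u : H →L[𝕜] E) : Prop := ∀ ξ x, u (M.smul ξ x) = u ξ * x

/-- `H` is selfdual: every bounded `E`-linear map `H → E` is `⟨·, η⟩` for some `η ∈ H`. -/
def Selfdual : Prop :=
  ∀ u : H →L[𝕜] E, M.IsModuleMap u → ∃ η, ∀ ζ, u ζ = M.inner ζ η

/-- A Hilbert right `E`-submodule of `H`: a (norm-)closed subspace stable under the
module action. -/
def IsHilbertSubmodule (K : Submodule 𝕜 H) : Prop :=
  (∀ ξ ∈ K, ∀ x : E, M.smul ξ x ∈ K) ∧ IsClosed (K : Set H)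

/-- Selfduality of a Hilbert right `E`-submodule `K` of `H`: every bounded `E`-linear
map `K → E` is `⟨·, η⟩` for some `η ∈ K`. -/
def SelfdualSub (K : Submodule 𝕜 H) : Prop :=
  ∀ u : K →L[𝕜] E,
    (∀ (ξ : K) (x : E) (h : M.smul (ξ : H) x ∈ K), u ⟨M.smul (ξ : H) x, h⟩ = u ξ * x) →
    ∃ η ∈ K, ∀ ζ : K, u ζ = M.inner (ζ : H) η

/-- An adjointable operator on `H`: an element of `L_E(H)`. -/
structure Adjointable : Type _ where
  toFun : H →L[𝕜] H
  adj : H →L[𝕜] H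
  inner_adj : ∀ ξ η, M.inner (toFun ξ) η = M.inner ξ (adj η)

variable {M}

/-- The identity operator in `L_E(H)`. -/
def idA : M.Adjointable := ⟨ContinuousLinearMap.id 𝕜 H, ContinuousLinearMap.id 𝕜 H, fun _ _ => rfl⟩

/-- Product in `L_E(H)`. -/
def mulA (u v : M.Adjointable) : M.Adjointable where
  toFun := u.toFun ∘L v.toFun
  adj := v.adj ∘L u.adj
  inner_adj := by
    intro ξ η
    simp only [ContinuousLinearMap.comp_apply]
    rw [u.inner_adj, v.inner_adj]

/-- Sum in `L_E(H)`. -/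
def addA (u v : M.Adjointable) : M.Adjointable where
  toFun := u.toFun + v.toFun
  adj := u.adj + v.adj
  inner_adj := by
    intro ξ η
    simp only [ContinuousLinearMap.add_apply]
    rw [M.inner_add_left', u.inner_adj, v.inner_adj, ← M.inner_add_right]

/-- Scalar multiple in `L_E(H)`. -/
def smulA (c : 𝕜) (u : M.Adjointable) : M.Adjointable where
  toFun := c • u.toFun
  adj := star c • u.adj
  inner_adj := by
    intro ξ η
    simp only [ContinuousLinearMap.smul_apply]
    rw [M.inner_smul_left', u.inner_adj, M.inner_smul_right, star_star]

/-- Adjoint (involution) in `L_E(H)`. -/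
def starA (u : M.Adjointable) : M.Adjointable where
  toFun := u.adj
  adj := u.toFun
  inner_adj := by
    intro ξ η
    have h := congrArg star (u.inner_adj η ξ)
    simpa [M.star_inner'] using h.symm

variable (M)

/-- The commutant of a subset of `L_E(H)`. -/
def commutant (F : Set M.Adjointable) : Set M.Adjointable :=
  {w | ∀ v ∈ F, w.toFun ∘L v.toFun = v.toFun ∘L w.toFun}

/-- `F` is an involutive subalgebra of `L_E(H)`. -/
def IsInvolutiveSubalgebra (F : Set M.Adjointable) : Prop :=
  (∀ u ∈ F, ∀ v ∈ F, addA u v ∈ F) ∧ (∀ u ∈ F, ∀ v ∈ F, mulA u v ∈ F) ∧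
    (∀ (c : 𝕜), ∀ u ∈ F, smulA c u ∈ F) ∧ (∀ u ∈ F, starA u ∈ F)

/-- `p ∈ Pr L_E(H)`: a self-adjoint idempotent adjointable operator. -/
def IsProjection (p : M.Adjointable) : Prop :=
  p.toFun ∘L p.toFun = p.toFun ∧ p.adj = p.toFun

variable {P : Type*} [NormedAddCommGroup P] [NormedSpace 𝕜 P]

/-- The weak topology `σ(H, Ḣ)` on `H`: the topology of pointwise convergence on the
functionals `ζ ↦ ⟨⟨ζ, ξ⟩, a⟩`, `a` in the predual of `E`, `ξ ∈ H`.
The predual of `E` is presented by a Banach space `P` together with an isometric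
isomorphism `eE : E ≃ P'`. -/
noncomputable def weakTopology (eE : E ≃ₗᵢ[𝕜] StrongDual 𝕜 P) : TopologicalSpace H :=
  ⨅ p : P × H,
    TopologicalSpace.induced (fun ζ : H => eE (M.inner ζ p.2) p.1) inferInstance

/-- The weak topology `σ(L_E(H), L̈(H))` on `L_E(H)`: the topology of pointwise
convergence on the functionals `u ↦ ⟨⟨u ξ, η⟩, a⟩`. -/
noncomputable def opWeakTopology (eE : E ≃ₗᵢ[𝕜] StrongDual 𝕜 P) : TopologicalSpace M.Adjointable :=
  ⨅ p : P × H × H,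
    TopologicalSpace.induced
      (fun w : M.Adjointable => eE (M.inner (w.toFun p.2.1) p.2.2) p.1) inferInstance

end HilbertModuleData

open HilbertModuleData

variable {𝕜 E H P : Type*} [RCLike 𝕜]
    [NormedRing E] [StarRing E] [CStarRing E] [NormedAlgebra 𝕜 E] [StarModule 𝕜 E]
    [CompleteSpace E] [PartialOrder E] [StarOrderedRing E]
    [NormedAddCommGroup H] [NormedSpace 𝕜 H] [CompleteSpace H]
    [NormedAddCommGroup P] [NormedSpace 𝕜 P]

/-! `p` is continuous for `σ(H, Ḣ)` because `⟨p ξ, ζ⟩ = ⟨ξ, p* ζ⟩`, and `σ(H, Ḣ)` is Hausdorff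
because `⟨ξ, ξ⟩ = 0` forces `ξ = 0`. Hence the range of the idempotent `p`, which is its
fixed-point set, is weakly closed. -/

theorem isClosed_range_of_comp_self {X : Type*} [TopologicalSpace X] [T2Space X] {f : X → X}
    (hf : Continuous f) (hff : f ∘ f = f) : IsClosed (Set.range f) := by
  have hfix : Set.range f = {x | f x = x} := by
    ext x
    refine ⟨?_, fun hx => ⟨x, hx⟩⟩
    rintro ⟨y, rfl⟩
    exact congrFun hff y
  rw [hfix]
  exact isClosed_eq hf continuous_id

namespace HilbertModuleData

variable {M : HilbertModuleData 𝕜 E H}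

lemma inner_sub_left (ξ η ζ : H) : M.inner (ξ - η) ζ = M.inner ξ ζ - M.inner η ζ :=
  map_sub (AddMonoidHom.mk' (M.inner · ζ) fun ξ η => M.inner_add_left' ξ η ζ) ξ η

lemma eq_zero_of_inner_self_eq_zero {ξ : H} (h : M.inner ξ ξ = 0) : ξ = 0 := by
  have hnorm : ‖ξ‖ ^ 2 = 0 := by rw [M.norm_eq', h, norm_zero]
  exact norm_eq_zero.mp (pow_eq_zero_iff two_ne_zero |>.mp hnorm)

lemma ext_inner_left {ξ η : H} (h : ∀ ζ, M.inner ξ ζ = M.inner η ζ) : ξ = η :=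
  sub_eq_zero.mp <| eq_zero_of_inner_self_eq_zero (M := M) <| by rw [inner_sub_left, h, sub_self]

lemma continuous_weakTopology_inner (eE : E ≃ₗᵢ[𝕜] StrongDual 𝕜 P) (a : P) (ζ : H) :
    Continuous[M.weakTopology eE, _] fun ξ => eE (M.inner ξ ζ) a :=
  continuous_iInf_dom (i := (a, ζ)) continuous_induced_dom

lemma t2Space_weakTopology (eE : E ≃ₗᵢ[𝕜] StrongDual 𝕜 P) : @T2Space H (M.weakTopology eE) := by
  let _ := M.weakTopology eE
  refine .of_injective_continuous (f := fun ξ (q : P × H) => eE (M.inner ξ q.2) q.1)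
    (fun ξ η hξη => ext_inner_left (M := M) fun ζ => eE.injective ?_) ?_
  · ext a
    exact congrFun hξη (a, ζ)
  · exact continuous_pi fun q => continuous_weakTopology_inner eE q.1 q.2

lemma Adjointable.continuous_weakTopology (eE : E ≃ₗᵢ[𝕜] StrongDual 𝕜 P) (u : M.Adjointable) :
    Continuous[M.weakTopology eE, M.weakTopology eE] u.toFun := by
  refine continuous_iInf_rng.mpr fun q => continuous_induced_rng.mpr ?_
  simp only [Function.comp_def, u.inner_adj]
  exact continuous_weakTopology_inner eE q.1 (u.adj q.2)

lemma Adjointable.isClosed_range_weakTopology (eE : E ≃ₗᵢ[𝕜] StrongDual 𝕜 P)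
    (u : M.Adjointable) (hu : u.toFun ∘L u.toFun = u.toFun) :
    IsClosed[M.weakTopology eE] (Set.range u.toFun) :=
  letI := M.weakTopology eE
  haveI := t2Space_weakTopology (M := M) eE
  isClosed_range_of_comp_self (u.continuous_weakTopology eE) (congrArg DFunLike.coe hu)

end HilbertModuleData

theorem range_projection_weakly_closed_general
    (M : HilbertModuleData 𝕜 E H)
    (eE : E ≃ₗᵢ[𝕜] StrongDual 𝕜 P)
    (K : Submodule 𝕜 H)
    (p : M.Adjointable) (hp : M.IsProjection p)
    (hrange : (K : Set H) = Set.range p.toFun) :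
    @IsClosed H (M.weakTopology eE) (K : Set H) := by
  rw [hrange]
  exact p.isClosed_range_weakTopology eE hp.1

/-- if `K = p(H)` for a projection `p ∈ Pr L_E(H)`, then `K` is closed in
the weak topology `σ(H, Ḣ)`. -/
theorem range_projection_weakly_closed
    (M : HilbertModuleData 𝕜 E H) (hH : M.Selfdual)
    (eE : E ≃ₗᵢ[𝕜] StrongDual 𝕜 P)
    (K : Submodule 𝕜 H) (hK : M.IsHilbertSubmodule K)
    (p : M.Adjointable) (hp : M.IsProjection p)
    (hrange : (K : Set H) = Set.range p.toFun) :
    @IsClosed H (M.weakTopology eE) (K : Set H) :=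
  range_projection_weakly_closed_general M eE K p hp hrange
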